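/- arXiv:1307.4931 — 2 statements merged into one kernel-verified Lean document; each statement's English description precedes it below -/
import Mathlib

section
/- Define T(1, x) = min over k of x_k for any finite sequence x of N reals, and for n ≥ 2, T(n, x) = max over j ∈ {1,…,N−n+2} of T(n−1, x^{(j)}), where x^{(j)} is x with its j-th term deleted. Then for any finite sequence x of N reals and any n with 1 ≤ n ≤ N, T(n, x) equals the n-th smallest term of x, i.e., T(n, x) = x(σ(n)) for any permutation σ of {1,…,N} with x∘σ monotone nondecreasing. -/
/-!
Write `v` for the `n`-th smallest term of `x`. Counting terms settles every comparison with an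
order statistic: `w ≤` the `k`-th smallest term iff fewer than `k` terms lie below `w`, and the
`k`-th smallest term is `≤ w` iff at least `k` terms are `≤ w`. Deleting a single term therefore
never pushes the `(n - 1)`-st smallest term above `v`. Conversely, at most `n - 1` terms lie
strictly below `v`, so either fewer than `n - 1` do, or the leftmost of them sits among the first
`N - n + 2` positions; deleting it (or the first term) leaves `v` as the `(n - 1)`-st smallest.
Hence the maximum defining `T n x` equals `v`, by induction on `n`.
-/

/-- `T n x` for a sequence `x` with `M` terms: `T 1 x` is the minimum of the
values of `x`, and for `n ≥ 2`, `T n x` is the maximum over (1-based) indices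
`j ∈ {1, …, M - n + 2}` of `T (n-1)` applied to `x` with its `j`-th term
deleted (deletion is composition with `Fin.succAbove`). -/
noncomputable def T : ℕ → {M : ℕ} → (Fin M → ℝ) → ℝ
  | 0, _, _ => 0
  | 1, _, x => sInf (Set.range x)
  | n + 2, 0, _ => 0
  | n + 2, M + 1, x =>
      sSup {y | ∃ j : Fin (M + 1), j.val + 1 ≤ (M + 1) - (n + 2) + 2 ∧
        y = T (n + 1) (x ∘ j.succAbove)}

open Finset

section OrderStatistic

variable {α : Type*} [LinearOrder α] {M : ℕ}

/-- `orderStat x k` is the `(k + 1)`-st smallest term of `x`: `k` counts from `0`. -/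
noncomputable def orderStat (x : Fin M → α) (k : Fin M) : α := x (Tuple.sort x k)

lemma orderStat_eq_of_monotone {x : Fin M → α} {σ : Equiv.Perm (Fin M)}
    (hσ : Monotone (x ∘ σ)) (k : Fin M) : x (σ k) = orderStat x k :=
  congrFun (Tuple.unique_monotone hσ (Tuple.monotone_sort x)) k

lemma card_filter_succAbove (j : Fin (M + 1)) (q : Fin (M + 1) → Prop) [DecidablePred q] :
    #{i | q (j.succAbove i)} = #(({i | q i} : Finset _).erase j) := by
  rw [← card_map j.succAboveEmb]
  congr 1
  ext i
  simp only [mem_map, mem_filter, mem_univ, true_and, Fin.coe_succAboveEmb, mem_erase]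
  constructor
  · rintro ⟨i, hi, rfl⟩
    exact ⟨Fin.succAbove_ne j i, hi⟩
  · rintro ⟨hij, hi⟩
    obtain ⟨i, rfl⟩ := Fin.exists_succAbove_eq hij
    exact ⟨i, hi, rfl⟩

lemma Antitone.apply_orderStat_iff {p : α → Prop} [DecidablePred p] (hp : Antitone p)
    (x : Fin M → α) (k : Fin M) : p (orderStat x k) ↔ k + 1 ≤ #{i | p (x i)} := by
  rw [← card_equiv (Tuple.sort x) (s := {i | p (x (Tuple.sort x i))}) (by simp)]
  have hmono := Tuple.monotone_sort x
  constructor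
  · intro hk
    calc k + 1 = #(Iic k) := (Fin.card_Iic k).symm
      _ ≤ _ := card_le_card fun i hi => mem_filter.2 ⟨mem_univ _, hp (hmono (mem_Iic.1 hi)) hk⟩
  · intro hk
    by_contra hnk
    have hsub : ({i | p (x (Tuple.sort x i))} : Finset _) ⊆ Iio k := fun i hi =>
      Finset.mem_Iio.2 (lt_of_not_ge fun hki => hnk (hp (hmono hki) (mem_filter.1 hi).2))
    have := card_le_card hsub
    rw [Fin.card_Iio] at this
    omega

lemma orderStat_le_iff {x : Fin M → α} {k : Fin M} {w : α} :
    orderStat x k ≤ w ↔ k + 1 ≤ #{i | x i ≤ w} :=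
  Antitone.apply_orderStat_iff (fun _ _ hab hb => le_trans hab hb) x k

lemma le_orderStat_iff {x : Fin M → α} {k : Fin M} {w : α} :
    w ≤ orderStat x k ↔ #{i | x i < w} ≤ k := by
  rw [← not_lt, Antitone.apply_orderStat_iff (p := (· < w)) (fun _ _ hab hb => lt_of_le_of_lt hab hb) x k]
  omega

lemma orderStat_comp_succAbove_le (x : Fin (M + 1) → α) (j : Fin (M + 1)) (k : Fin M) :
    orderStat (x ∘ j.succAbove) k ≤ orderStat x k.succ := by
  have hle : (k.succ : ℕ) + 1 ≤ #{i | x i ≤ orderStat x k.succ} := orderStat_le_iff.1 le_rfl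
  have hcard : #{i | (x ∘ j.succAbove) i ≤ orderStat x k.succ} =
      #(({i | x i ≤ orderStat x k.succ} : Finset _).erase j) :=
    card_filter_succAbove j (fun i => x i ≤ orderStat x k.succ)
  have := pred_card_le_card_erase (s := {i | x i ≤ orderStat x k.succ}) (a := j)
  rw [orderStat_le_iff, hcard]
  simp only [Fin.val_succ] at hle
  omega

lemma exists_card_erase_le {L : Finset (Fin (M + 1))} {k : ℕ} (hk : k ≤ M)
    (hL : #L ≤ k + 1) : ∃ j : Fin (M + 1), (j : ℕ) + k ≤ M ∧ #(L.erase j) ≤ k := by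
  rcases hL.lt_or_eq with hL | hL
  · exact ⟨0, by simpa, (card_erase_le).trans (by omega)⟩
  · have hne : L.Nonempty := card_pos.1 (by omega)
    refine ⟨L.min' hne, ?_, by rw [card_erase_of_mem (min'_mem L hne)]; omega⟩
    have : #L ≤ #(Ici (L.min' hne)) := card_le_card fun i hi => mem_Ici.2 (min'_le L i hi)
    rw [Fin.card_Ici] at this
    omega

lemma exists_orderStat_le_orderStat_comp_succAbove (x : Fin (M + 1) → α) (k : Fin M) :
    ∃ j : Fin (M + 1), (j : ℕ) + k ≤ M ∧ orderStat x k.succ ≤ orderStat (x ∘ j.succAbove) k := by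
  have hlt : #{i | x i < orderStat x k.succ} ≤ k + 1 := le_orderStat_iff.1 le_rfl
  obtain ⟨j, hj, hjL⟩ := exists_card_erase_le k.is_lt.le hlt
  refine ⟨j, hj, le_orderStat_iff.2 ?_⟩
  rwa [← card_filter_succAbove j (fun i => x i < orderStat x k.succ)] at hjL

end OrderStatistic

lemma T_one_eq_orderStat_zero {M : ℕ} (x : Fin (M + 1) → ℝ) : T 1 x = orderStat x 0 := by
  refine IsLeast.csInf_eq ⟨⟨_, rfl⟩, ?_⟩
  rintro _ ⟨i, rfl⟩
  exact orderStat_le_iff.2 (by simpa using card_pos.2 ⟨i, by simp⟩)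

lemma T_succ_eq_orderStat : ∀ (k : ℕ) {M : ℕ} (x : Fin M → ℝ) (hk : k < M),
    T (k + 1) x = orderStat x ⟨k, hk⟩
  | 0, _ + 1, x, _ => T_one_eq_orderStat_zero x
  | k + 1, M + 1, x, hk => by
    have hdel (j : Fin (M + 1)) :
        T (k + 1) (x ∘ j.succAbove) = orderStat (x ∘ j.succAbove) ⟨k, by omega⟩ :=
      T_succ_eq_orderStat k _ _
    refine IsGreatest.csSup_eq ⟨?_, ?_⟩
    · obtain ⟨j, hj, hle⟩ := exists_orderStat_le_orderStat_comp_succAbove x ⟨k, by omega⟩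
      refine ⟨j, by dsimp only at hj; omega, ?_⟩
      rw [hdel]
      exact le_antisymm hle (orderStat_comp_succAbove_le x j _)
    · rintro _ ⟨j, -, rfl⟩
      rw [hdel]
      exact orderStat_comp_succAbove_le x j _

/-- The sequence has `N + 1` terms; `T n x` is its `n`-th smallest term,
namely `x (σ ⟨n - 1, _⟩)` for any sorting permutation `σ`. -/
theorem T_eq_nth_smallest (N : ℕ) (x : Fin (N + 1) → ℝ)
    (σ : Equiv.Perm (Fin (N + 1))) (hσ : Monotone (x ∘ σ))
    (n : ℕ) (hn1 : 1 ≤ n) (hnN : n ≤ N + 1) :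
    T n x = x (σ ⟨n - 1, by omega⟩) := by
  obtain ⟨k, rfl⟩ : ∃ k, n = k + 1 := ⟨n - 1, by omega⟩
  rw [orderStat_eq_of_monotone hσ, T_succ_eq_orderStat k x]
  rfl
end

section
/- Let x : Fin N → ℝ, let σ be a permutation of {1,…,N} sorting x nondecreasingly, let 2 ≤ n ≤ N, and let j ∈ {1,…,N}. If j ∈ {σ(1),…,σ(n−1)}, then the (n−1)-th smallest term of the deleted sequence x^{(j)} equals x(σ(n)); if j ∉ {σ(1),…,σ(n−1)}, then the (n−1)-th smallest term of x^{(j)} equals x(σ(n−1)). -/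
/-!
Deleting the term `x j` from the sorted arrangement `x ∘ σ` leaves a nondecreasing
arrangement of the deleted sequence, namely `x ∘ σ ∘ k.succAbove` with `σ k = j`. Sorted
arrangements of a tuple are unique, so the `m`-th smallest term of `x ∘ j.succAbove` is
the `m`-th term of `x ∘ σ` when `m < k`, and the `(m + 1)`-th one otherwise.
-/

namespace Equiv.Perm

def succAboveRestrict {N : ℕ} (σ : Perm (Fin (N + 1))) (j : Fin (N + 1)) : Perm (Fin N) :=
  (finSuccAboveEquiv (σ.symm j)).trans <|
    (σ.subtypeEquiv fun a => by rw [Ne, Ne, eq_symm_apply]).trans (finSuccAboveEquiv j).symm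

theorem succAbove_succAboveRestrict {N : ℕ} (σ : Perm (Fin (N + 1))) (j : Fin (N + 1))
    (i : Fin N) : j.succAbove (σ.succAboveRestrict j i) = σ ((σ.symm j).succAbove i) :=
  congrArg Subtype.val ((finSuccAboveEquiv j).apply_symm_apply _)

end Equiv.Perm

theorem comp_succAbove_comp_eq_of_monotone {α : Type*} [PartialOrder α] {N : ℕ}
    {x : Fin (N + 1) → α} {σ : Equiv.Perm (Fin (N + 1))} (hσ : Monotone (x ∘ σ))
    {j : Fin (N + 1)} {τ : Equiv.Perm (Fin N)} (hτ : Monotone ((x ∘ j.succAbove) ∘ τ)) :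
    (x ∘ j.succAbove) ∘ τ = x ∘ σ ∘ (σ.symm j).succAbove := by
  have hρ : (x ∘ j.succAbove) ∘ σ.succAboveRestrict j = x ∘ σ ∘ (σ.symm j).succAbove :=
    funext fun i => congrArg x (σ.succAbove_succAboveRestrict j i)
  rw [Tuple.unique_monotone hτ (hρ ▸ hσ.comp (Fin.strictMono_succAbove _).monotone), hρ]

/-- The sequence `x` has `N + 1` terms; `σ` sorts `x`, `τ` sorts the sequence
obtained from `x` by deleting the term at index `j` (via `Fin.succAbove`).
The (1-based) `m`-th smallest term corresponds to the zero-based index `m - 1`.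
`j` is among the first `n - 1` sorted positions iff `∃ i, i.val < n - 1 ∧ σ i = j`. -/
theorem deleted_nth_smallest (N : ℕ) (x : Fin (N + 1) → ℝ)
    (σ : Equiv.Perm (Fin (N + 1))) (hσ : Monotone (x ∘ σ))
    (n : ℕ) (hn2 : 2 ≤ n) (hnN : n ≤ N + 1) (j : Fin (N + 1))
    (τ : Equiv.Perm (Fin N)) (hτ : Monotone ((x ∘ j.succAbove) ∘ τ)) :
    ((∃ i : Fin (N + 1), i.val < n - 1 ∧ σ i = j) →
        (x ∘ j.succAbove) (τ ⟨n - 2, by omega⟩) = x (σ ⟨n - 1, by omega⟩)) ∧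
    (¬ (∃ i : Fin (N + 1), i.val < n - 1 ∧ σ i = j) →
        (x ∘ j.succAbove) (τ ⟨n - 2, by omega⟩) = x (σ ⟨n - 2, by omega⟩)) := by
  have hsorted := congrFun (comp_succAbove_comp_eq_of_monotone hσ hτ) ⟨n - 2, by omega⟩
  simp only [Function.comp_apply] at hsorted ⊢
  have hmem : (∃ i : Fin (N + 1), i.val < n - 1 ∧ σ i = j) ↔ (σ.symm j).val < n - 1 :=
    ⟨fun ⟨i, hi, hij⟩ => by rwa [← hij, Equiv.symm_apply_apply],
      fun h => ⟨σ.symm j, h, σ.apply_symm_apply j⟩⟩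
  rw [hmem, hsorted]
  constructor
  · intro hlt
    rw [Fin.succAbove_of_le_castSucc _ _ (Fin.le_def.mpr (by simp; omega))]
    exact congrArg (x ∘ σ) (Fin.ext (by simp only [Fin.val_succ]; omega))
  · intro hge
    rw [Fin.succAbove_of_castSucc_lt _ _ (Fin.lt_def.mpr (by simp; omega))]
    rfl
end
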